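/- arXiv:2506.04183 — 3 statements merged into one kernel-verified Lean document; each statement's English description precedes it below -/
import Mathlib

section
/- Let n, k, m be positive natural numbers, let φ : ℝ → ℝ be convex on all of ℝ and monotone (nondecreasing), let W be an m × k real matrix all of whose entries are nonnegative, let V be an m × n real matrix, and let ω ∈ ℝ^m. Suppose z : ℝ^n → ℝ^k is a function such that for every j, the component map x ↦ (z x) j is convex on all of ℝ^n. Then for every i, the map x ↦ φ((W · (z x) + V · x + ω) i), i.e., the i-th component of the next layer obtained by applying φ componentwise to W z(x) + V x + ω, is convex on all of ℝ^n. -/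
/-! The pre-activation `(W z(x) + V x + ω) i` is a nonnegative combination of the convex
functions `z · j` plus a linear function and a constant, hence convex; composing a convex
function with a convex nondecreasing `φ` keeps it convex. -/

open Matrix

section

variable {𝕜 E β : Type*} [Semiring 𝕜] [PartialOrder 𝕜] [AddCommMonoid E] [SMul 𝕜 E]
  [AddCommMonoid β] [PartialOrder β] {s : Set E}

theorem ConvexOn.monotone_comp {γ : Type*} [AddCommMonoid γ] [PartialOrder γ] [SMul 𝕜 β]
    [SMul 𝕜 γ] {f : E → β} {g : β → γ} (hg : ConvexOn 𝕜 Set.univ g) (hg_mono : Monotone g)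
    (hf : ConvexOn 𝕜 s f) : ConvexOn 𝕜 s (g ∘ f) :=
  ⟨hf.1, fun _ hx _ hy _ _ ha hb hab =>
    (hg_mono (hf.2 hx hy ha hb hab)).trans (hg.2 trivial trivial ha hb hab)⟩

theorem ConvexOn.finset_sum {ι : Type*} [IsOrderedAddMonoid β] [Module 𝕜 β] {f : ι → E → β}
    (t : Finset ι) (hs : Convex 𝕜 s) (hf : ∀ j ∈ t, ConvexOn 𝕜 s (f j)) :
    ConvexOn 𝕜 s fun x => ∑ j ∈ t, f j x := by
  classical
  induction t using Finset.induction with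
  | empty => simpa using convexOn_const (0 : β) hs
  | insert j t hj ih =>
    simp only [Finset.sum_insert hj]
    exact (hf j (t.mem_insert_self j)).add (ih fun l hl => hf l (Finset.mem_insert_of_mem hl))

end

theorem ConvexOn.mulVec_apply_of_nonneg {𝕜 E ι m : Type*} [CommSemiring 𝕜] [PartialOrder 𝕜]
    [IsOrderedRing 𝕜] [AddCommMonoid E] [SMul 𝕜 E] [Fintype ι] {s : Set E}
    {W : Matrix m ι 𝕜} {i : m} {z : E → ι → 𝕜} (hs : Convex 𝕜 s) (hW : ∀ j, 0 ≤ W i j)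
    (hz : ∀ j, ConvexOn 𝕜 s fun x => z x j) : ConvexOn 𝕜 s fun x => (W *ᵥ z x) i :=
  ConvexOn.finset_sum Finset.univ hs fun j _ => (hz j).smul (hW j)

theorem layer_preserves_convexity_general
    (n k m : ℕ)
    (φ : ℝ → ℝ) (hφ_convex : ConvexOn ℝ Set.univ φ) (hφ_mono : Monotone φ)
    (W : Matrix (Fin m) (Fin k) ℝ) (hW : ∀ i j, 0 ≤ W i j)
    (V : Matrix (Fin m) (Fin n) ℝ) (ω : Fin m → ℝ)
    (z : (Fin n → ℝ) → (Fin k → ℝ))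
    (hz : ∀ j, ConvexOn ℝ Set.univ (fun x => z x j)) :
    ∀ i : Fin m,
      ConvexOn ℝ Set.univ (fun x => φ ((W.mulVec (z x) + V.mulVec x + ω) i)) := by
  intro i
  have hWz := ConvexOn.mulVec_apply_of_nonneg convex_univ (hW i) hz
  have hVx := (LinearMap.proj i ∘ₗ V.mulVecLin).convexOn convex_univ
  exact hφ_convex.monotone_comp hφ_mono ((hWz.add hVx).add_const (ω i))

/-- One layer of an input-convex neural network preserves convexity:
if every component of `z` is convex in `x`, `φ` is convex and nondecreasing,
and `W` has nonnegative entries, then every component of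
`φ(W z(x) + V x + ω)` is convex in `x`. -/
theorem layer_preserves_convexity
    (n k m : ℕ) (hn : 0 < n) (hk : 0 < k) (hm : 0 < m)
    (φ : ℝ → ℝ) (hφ_convex : ConvexOn ℝ Set.univ φ) (hφ_mono : Monotone φ)
    (W : Matrix (Fin m) (Fin k) ℝ) (hW : ∀ i j, 0 ≤ W i j)
    (V : Matrix (Fin m) (Fin n) ℝ) (ω : Fin m → ℝ)
    (z : (Fin n → ℝ) → (Fin k → ℝ))
    (hz : ∀ j, ConvexOn ℝ Set.univ (fun x => z x j)) :
    ∀ i : Fin m,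
      ConvexOn ℝ Set.univ (fun x => φ ((W.mulVec (z x) + V.mulVec x + ω) i)) :=
  layer_preserves_convexity_general n k m φ hφ_convex hφ_mono W hW V ω z hz
end

section
/- Let L ≥ 1, let n₀ = n, n₁, …, n_{L−1} be positive layer dimensions and n_L = d the output dimension. Let φ : ℝ → ℝ be convex on all of ℝ and monotone (nondecreasing). For l = 1, …, L let W^l be an n_l × n_{l−1} real matrix all of whose entries are nonnegative, V^l an n_l × n real matrix, and ω^l ∈ ℝ^{n_l}. Define z⁰(x) = x, z^l(x) = φ applied componentwise to (W^l · z^{l−1}(x) + V^l · x + ω^l) for l = 1, …, L−1, and the network output f(x) = W^L · z^{L−1}(x) + V^L · x + ω^L. Then for every output index i ∈ Fin d, the map x ↦ (f x) i is convex on all of ℝ^n. -/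
open Matrix Set

/-!
Each coordinate of a hidden layer is `φ` applied to a nonnegative combination of the previous
layer's coordinates plus an affine function of `x`. Nonnegative combinations of convex
functions are convex, and so is a convex nondecreasing function of a convex function; induction
over the layers makes every hidden coordinate convex, and the output is one more such
combination, without `φ`.
-/

theorem ConvexOn.comp_of_monotone {𝕜 E α β : Type*} [Semiring 𝕜] [PartialOrder 𝕜]
    [AddCommMonoid E] [SMul 𝕜 E] [AddCommMonoid α] [PartialOrder α] [SMul 𝕜 α]
    [AddCommMonoid β] [PartialOrder β] [SMul 𝕜 β] {s : Set E} {g : β → α} {f : E → β}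
    (hg : ConvexOn 𝕜 univ g) (hg_mono : Monotone g) (hf : ConvexOn 𝕜 s f) :
    ConvexOn 𝕜 s (g ∘ f) :=
  ⟨hf.1, fun _ hx _ hy _ _ ha hb hab =>
    (hg_mono (hf.2 hx hy ha hb hab)).trans (hg.2 trivial trivial ha hb hab)⟩

theorem ConvexOn.sum {𝕜 E β ι : Type*} [Semiring 𝕜] [PartialOrder 𝕜] [AddCommMonoid E]
    [SMul 𝕜 E] [AddCommMonoid β] [PartialOrder β] [IsOrderedAddMonoid β] [Module 𝕜 β]
    {s : Set E} {t : Finset ι} {f : ι → E → β} (hs : Convex 𝕜 s)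
    (hf : ∀ i ∈ t, ConvexOn 𝕜 s (f i)) : ConvexOn 𝕜 s (∑ i ∈ t, f i) :=
  Finset.sum_induction f (ConvexOn 𝕜 s) (fun _ _ => ConvexOn.add) (convexOn_const 0 hs) hf

section

variable {𝕜 m n p : Type*} [CommSemiring 𝕜] [PartialOrder 𝕜] [IsOrderedRing 𝕜]
  [Fintype n] [Fintype p]

theorem convexOn_mulVec_apply_of_nonneg {E : Type*} [AddCommMonoid E] [SMul 𝕜 E] {s : Set E}
    {W : Matrix m n 𝕜} {i : m} (hW : ∀ j, 0 ≤ W i j) {g : E → n → 𝕜} (hs : Convex 𝕜 s)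
    (hg : ∀ j, ConvexOn 𝕜 s fun x => g x j) :
    ConvexOn 𝕜 s fun x => (W *ᵥ g x) i := by
  simpa only [mulVec, dotProduct, smul_eq_mul, Finset.sum_fn] using
    ConvexOn.sum (t := Finset.univ) hs fun j _ => (hg j).smul (hW j)

theorem convexOn_mulVec_add_apply {s : Set (p → 𝕜)} (V : Matrix m p 𝕜) (ω : m → 𝕜) (i : m)
    (hs : Convex 𝕜 s) :
    ConvexOn 𝕜 s fun x => (V *ᵥ x + ω) i :=
  (((LinearMap.proj i).comp V.mulVecLin).convexOn hs).add_const (ω i)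

theorem convexOn_layer_apply {s : Set (p → 𝕜)} {W : Matrix m n 𝕜} {i : m} (hW : ∀ j, 0 ≤ W i j)
    (V : Matrix m p 𝕜) (ω : m → 𝕜) {g : (p → 𝕜) → n → 𝕜} (hs : Convex 𝕜 s)
    (hg : ∀ j, ConvexOn 𝕜 s fun x => g x j) :
    ConvexOn 𝕜 s fun x => (W *ᵥ g x + V *ᵥ x + ω) i := by
  simpa only [add_assoc, Pi.add_def] using
    (convexOn_mulVec_apply_of_nonneg hW hs hg).add (convexOn_mulVec_add_apply V ω i hs)

theorem convexOn_hiddenLayer_apply {ι : ℕ → Type*} [∀ l, Fintype (ι l)] {s : Set (ι 0 → 𝕜)}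
    (hs : Convex 𝕜 s) {φ : 𝕜 → 𝕜} (hφ_convex : ConvexOn 𝕜 univ φ) (hφ_mono : Monotone φ)
    {W : (l : ℕ) → Matrix (ι (l + 1)) (ι l) 𝕜} {V : (l : ℕ) → Matrix (ι (l + 1)) (ι 0) 𝕜}
    {ω : (l : ℕ) → ι (l + 1) → 𝕜} {z : (l : ℕ) → (ι 0 → 𝕜) → ι l → 𝕜} {N : ℕ}
    (hW : ∀ l < N, ∀ i j, 0 ≤ W l i j) (hz0 : ∀ x, z 0 x = x)
    (hzrec : ∀ l, l + 1 ≤ N → ∀ x, z (l + 1) x = fun i => φ ((W l *ᵥ z l x + V l *ᵥ x + ω l) i)) :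
    ∀ l ≤ N, ∀ j, ConvexOn 𝕜 s fun x => z l x j := by
  intro l
  induction l with
  | zero =>
    intro _ j
    simp only [hz0]
    exact (LinearMap.proj j).convexOn hs
  | succ l ih =>
    intro hl j
    simp only [hzrec l hl]
    exact hφ_convex.comp_of_monotone hφ_mono <|
      convexOn_layer_apply (hW l hl j) (V l) (ω l) hs (ih (by omega))

end

theorem icnn_output_convex_general
    (L : ℕ) (hL : 1 ≤ L)
    (dims : ℕ → ℕ)
    (φ : ℝ → ℝ) (hφ_convex : ConvexOn ℝ Set.univ φ) (hφ_mono : Monotone φ)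
    (W : (l : ℕ) → Matrix (Fin (dims (l + 1))) (Fin (dims l)) ℝ)
    (hW : ∀ l, l + 1 ≤ L → ∀ i j, 0 ≤ W l i j)
    (V : (l : ℕ) → Matrix (Fin (dims (l + 1))) (Fin (dims 0)) ℝ)
    (ω : (l : ℕ) → Fin (dims (l + 1)) → ℝ)
    (z : (l : ℕ) → (Fin (dims 0) → ℝ) → (Fin (dims l) → ℝ))
    (hz0 : ∀ x, z 0 x = x)
    (hzrec : ∀ l, l + 1 ≤ L - 1 → ∀ x,
      z (l + 1) x = fun i => φ (((W l).mulVec (z l x) + (V l).mulVec x + ω l) i))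
    (f : (Fin (dims 0) → ℝ) → (Fin (dims (L - 1 + 1)) → ℝ))
    (hf : ∀ x, f x =
      (W (L - 1)).mulVec (z (L - 1) x) + (V (L - 1)).mulVec x + ω (L - 1)) :
    ∀ i : Fin (dims (L - 1 + 1)), ConvexOn ℝ Set.univ (fun x => f x i) := by
  have hidden := convexOn_hiddenLayer_apply (ι := fun l => Fin (dims l)) (N := L - 1)
    convex_univ hφ_convex hφ_mono (fun l hl => hW l (by omega)) hz0 hzrec
  intro i
  simpa only [hf] using convexOn_layer_apply (hW (L - 1) (by omega) i) (V (L - 1)) (ω (L - 1))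
    convex_univ (hidden (L - 1) le_rfl)

/-- The output of an input-convex neural network
`z⁰ = x`, `z^l = φ(W^l z^{l−1} + V^l x + ω^l)` (`l = 1, …, L−1`),
`f(x) = W^L z^{L−1}(x) + V^L x + ω^L`,
with convex nondecreasing activation `φ` and elementwise nonnegative inner
weight matrices `W^l`, is componentwise convex in the input `x`.
Here `dims l` is the width `n_l` of layer `l` (`dims 0 = n`, and
`dims (L - 1 + 1) = dims L = d` since `1 ≤ L`),
and `W l`, `V l`, `ω l` are the data of layer `l + 1`. -/
theorem icnn_output_convex
    (L : ℕ) (hL : 1 ≤ L)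
    (dims : ℕ → ℕ) (hdims : ∀ l, l ≤ L - 1 → 0 < dims l)
    (φ : ℝ → ℝ) (hφ_convex : ConvexOn ℝ Set.univ φ) (hφ_mono : Monotone φ)
    (W : (l : ℕ) → Matrix (Fin (dims (l + 1))) (Fin (dims l)) ℝ)
    (hW : ∀ l, l + 1 ≤ L → ∀ i j, 0 ≤ W l i j)
    (V : (l : ℕ) → Matrix (Fin (dims (l + 1))) (Fin (dims 0)) ℝ)
    (ω : (l : ℕ) → Fin (dims (l + 1)) → ℝ)
    (z : (l : ℕ) → (Fin (dims 0) → ℝ) → (Fin (dims l) → ℝ))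
    (hz0 : ∀ x, z 0 x = x)
    (hzrec : ∀ l, l + 1 ≤ L - 1 → ∀ x,
      z (l + 1) x = fun i => φ (((W l).mulVec (z l x) + (V l).mulVec x + ω l) i))
    (f : (Fin (dims 0) → ℝ) → (Fin (dims (L - 1 + 1)) → ℝ))
    (hf : ∀ x, f x =
      (W (L - 1)).mulVec (z (L - 1) x) + (V (L - 1)).mulVec x + ω (L - 1)) :
    ∀ i : Fin (dims (L - 1 + 1)), ConvexOn ℝ Set.univ (fun x => f x i) :=
  icnn_output_convex_general L hL dims φ hφ_convex hφ_mono W hW V ω z hz0 hzrec f hf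
end

section
/- Let L ≥ 1, let n₀ = n, n₁, …, n_{L−1} be positive layer dimensions and n_L = d the output dimension. Let φ : ℝ → ℝ be convex on all of ℝ and monotone (nondecreasing). For l = 1, …, L let W^l be an n_l × n_{l−1} real matrix all of whose entries are nonnegative, V^l an n_l × n real matrix all of whose entries are nonnegative, and ω^l ∈ ℝ^{n_l}. Define z⁰(x) = x, z^l(x) = φ applied componentwise to (W^l · z^{l−1}(x) + V^l · x + ω^l) for l = 1, …, L−1, and f(x) = W^L · z^{L−1}(x) + V^L · x + ω^L. Then for every output index i ∈ Fin d, the map x ↦ (f x) i is convex on all of ℝ^n and monotone with respect to the componentwise partial order on ℝ^n: if x ≤ x' componentwise, then (f x) i ≤ (f x') i. -/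
open Matrix Finset

lemma myConvexOn_sum {E : Type*} [AddCommMonoid E] [Module ℝ E] {ι : Type*}
    (t : Finset ι) (g : ι → E → ℝ) (h : ∀ j ∈ t, ConvexOn ℝ Set.univ (g j)) :
    ConvexOn ℝ Set.univ (fun x => ∑ j ∈ t, g j x) := by
  induction t using Finset.cons_induction with
  | empty => simpa using convexOn_const 0 convex_univ
  | cons a s ha ih =>
    simp only [Finset.sum_cons]
    exact (h a (Finset.mem_cons_self a s)).add
      (ih fun j hj => h j (Finset.mem_cons_of_mem hj))

lemma myConvexOn_comp {E : Type*} [AddCommMonoid E] [Module ℝ E]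
    {φ : ℝ → ℝ} (hφ : ConvexOn ℝ Set.univ φ) (hm : Monotone φ)
    {g : E → ℝ} (hg : ConvexOn ℝ Set.univ g) :
    ConvexOn ℝ Set.univ (fun x => φ (g x)) := by
  refine ⟨convex_univ, fun x _ y _ a b ha hb hab => ?_⟩
  calc φ (g (a • x + b • y)) ≤ φ (a * g x + b * g y) := by
        have := hg.2 (Set.mem_univ x) (Set.mem_univ y) ha hb hab
        exact hm (by simpa using this)
    _ ≤ a * φ (g x) + b * φ (g y) := by
        have := hφ.2 (Set.mem_univ (g x)) (Set.mem_univ (g y)) ha hb hab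
        simpa using this

lemma myConvexOn_mul {E : Type*} [AddCommMonoid E] [Module ℝ E]
    {c : ℝ} (hc : 0 ≤ c) {g : E → ℝ} (hg : ConvexOn ℝ Set.univ g) :
    ConvexOn ℝ Set.univ (fun x => c * g x) := by
  simpa [smul_eq_mul] using hg.smul hc

lemma myConvexOn_proj {n : ℕ} (j : Fin n) :
    ConvexOn ℝ Set.univ (fun x : Fin n → ℝ => x j) :=
  ⟨convex_univ, fun x _ y _ a b _ _ _ => le_of_eq (by simp)⟩

/-- One affine layer applied to a componentwise convex & monotone family. -/
lemma layer_cm {n m k : ℕ}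
    (A : Matrix (Fin k) (Fin m) ℝ) (hA : ∀ i j, 0 ≤ A i j)
    (B : Matrix (Fin k) (Fin n) ℝ) (hB : ∀ i j, 0 ≤ B i j)
    (ω : Fin k → ℝ)
    (g : (Fin n → ℝ) → Fin m → ℝ)
    (hg : ∀ j, ConvexOn ℝ Set.univ (fun x => g x j) ∧ Monotone (fun x => g x j)) :
    ∀ i, ConvexOn ℝ Set.univ (fun x => (A.mulVec (g x) + B.mulVec x + ω) i) ∧
      Monotone (fun x => (A.mulVec (g x) + B.mulVec x + ω) i) := by
  intro i
  have hrw : (fun x : Fin n → ℝ => (A.mulVec (g x) + B.mulVec x + ω) i)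
      = fun x => (∑ j, A i j * g x j) + ((∑ j, B i j * x j) + ω i) := by
    funext x
    simp [mulVec, dotProduct]
    ring
  constructor
  · rw [hrw]
    refine ConvexOn.add (myConvexOn_sum _ _ fun j _ => myConvexOn_mul (hA i j) (hg j).1) ?_
    refine ConvexOn.add (myConvexOn_sum _ _ fun j _ => myConvexOn_mul (hB i j) (myConvexOn_proj j)) ?_
    exact convexOn_const _ convex_univ
  · rw [hrw]
    intro x y hxy
    dsimp only
    gcongr (∑ j, A i j * ?_) + ((∑ j, B i j * ?_) + ω i) with j hj j hj
    · exact hA i j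
    · exact (hg j).2 hxy
    · exact hB i j
    · exact hxy j

/-- The output of an input-convex neural network
`z⁰ = x`, `z^l = φ(W^l z^{l−1} + V^l x + ω^l)` (`l = 1, …, L−1`),
`f(x) = W^L z^{L−1}(x) + V^L x + ω^L`,
with convex nondecreasing activation `φ` and elementwise nonnegative weight
matrices `W^l` and `V^l`, is componentwise convex and monotone
(for the componentwise partial order) in the input `x`.
Here `dims l` is the width `n_l` of layer `l` (`dims 0 = n`, and
`dims (L - 1 + 1) = dims L = d` since `1 ≤ L`),
and `W l`, `V l`, `ω l` are the data of layer `l + 1`. -/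
theorem icnn_output_convex_monotone
    (L : ℕ) (hL : 1 ≤ L)
    (dims : ℕ → ℕ) (hdims : ∀ l, l ≤ L - 1 → 0 < dims l)
    (φ : ℝ → ℝ) (hφ_convex : ConvexOn ℝ Set.univ φ) (hφ_mono : Monotone φ)
    (W : (l : ℕ) → Matrix (Fin (dims (l + 1))) (Fin (dims l)) ℝ)
    (hW : ∀ l, l + 1 ≤ L → ∀ i j, 0 ≤ W l i j)
    (V : (l : ℕ) → Matrix (Fin (dims (l + 1))) (Fin (dims 0)) ℝ)
    (hV : ∀ l, l + 1 ≤ L → ∀ i j, 0 ≤ V l i j)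
    (ω : (l : ℕ) → Fin (dims (l + 1)) → ℝ)
    (z : (l : ℕ) → (Fin (dims 0) → ℝ) → (Fin (dims l) → ℝ))
    (hz0 : ∀ x, z 0 x = x)
    (hzrec : ∀ l, l + 1 ≤ L - 1 → ∀ x,
      z (l + 1) x = fun i => φ (((W l).mulVec (z l x) + (V l).mulVec x + ω l) i))
    (f : (Fin (dims 0) → ℝ) → (Fin (dims (L - 1 + 1)) → ℝ))
    (hf : ∀ x, f x =
      (W (L - 1)).mulVec (z (L - 1) x) + (V (L - 1)).mulVec x + ω (L - 1)) :
    ∀ i : Fin (dims (L - 1 + 1)),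
      ConvexOn ℝ Set.univ (fun x => f x i) ∧
      Monotone (fun x => f x i) := by
  have key : ∀ l, l ≤ L - 1 → ∀ j,
      ConvexOn ℝ Set.univ (fun x => z l x j) ∧ Monotone (fun x => z l x j) := by
    intro l
    induction l with
    | zero =>
      intro _ j
      simp only [hz0]
      exact ⟨myConvexOn_proj j, fun x y hxy => hxy j⟩
    | succ l ih =>
      intro hl j
      have hl' : l ≤ L - 1 := by omega
      have hlL : l + 1 ≤ L := by omega
      have hlayer := layer_cm (W l) (hW l hlL) (V l) (hV l hlL) (ω l) (z l) (ih hl')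
      simp only [hzrec l hl]
      exact ⟨myConvexOn_comp hφ_convex hφ_mono (hlayer j).1,
        hφ_mono.comp (hlayer j).2⟩
  intro i
  have hlayer := layer_cm (W (L - 1)) (hW (L - 1) (by omega)) (V (L - 1))
    (hV (L - 1) (by omega)) (ω (L - 1)) (z (L - 1)) (key (L - 1) le_rfl)
  simp only [hf]
  exact hlayer i
end
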